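/- arXiv:2407.09476 — 9 statements merged into one kernel-verified Lean document; each statement's English description precedes it below -/
import Mathlib

section
/- Let G be a finite simple graph that is 3-non-compliant. Then for any two non-adjacent vertices u and v of G, the number of common neighbors of u and v in G is at least 3, i.e. |N_G(u) ∩ N_G(v)| ≥ 3. -/
/-- `S` is a connected dominating set of the simple graph `G`: the subgraph of `G`
induced by `S` is connected (in particular `S` is nonempty) and every vertex
outside `S` has a neighbor in `S`. -/
def ConnDomSet {V : Type*} (G : SimpleGraph V) (S : Finset V) : Prop :=
  S.Nonempty ∧ (G.induce (↑S : Set V)).Connected ∧ ∀ v ∉ S, ∃ u ∈ S, G.Adj u v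

/-- A graph `G` is `k`-compliant if `G` or its complement has a connected dominating
set of cardinality at most `k`. -/
def Compliant {V : Type*} (G : SimpleGraph V) (k : ℕ) : Prop :=
  (∃ S : Finset V, S.card ≤ k ∧ ConnDomSet G S) ∨
    (∃ S : Finset V, S.card ≤ k ∧ ConnDomSet Gᶜ S)

/-!
If `u` and `v` are non-adjacent with common neighbourhood `C`, `|C| ≤ 2`, then either some
vertex `x` is non-adjacent to all of `C`, and `{u, v, x}` is a connected dominating set of
the complement (`uv` is an edge there, `x` misses `u` or `v` since `x ∉ C`, and every vertex
outside `C` misses `u` or `v`); or `C` dominates every vertex outside it, and the star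
`{u} ∪ C` is a connected dominating set of `G`. Either way `G` is `3`-compliant.
-/

namespace SimpleGraph

variable {V : Type*} {G : SimpleGraph V}

theorem induce_connected_of_forall_adj {s : Set V} {a : V} (ha : a ∈ s)
    (h : ∀ b ∈ s, b ≠ a → G.Adj a b) : (G.induce s).Connected := by
  refine (connected_iff_exists_forall_reachable _).2 ⟨⟨a, ha⟩, fun ⟨b, hb⟩ => ?_⟩
  by_cases hba : b = a
  · subst hba
    rfl
  · exact Adj.reachable (h b hb hba)

theorem connDomSet_of_forall_adj {S : Finset V} {a : V} (ha : a ∈ S)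
    (hstar : ∀ b ∈ S, b ≠ a → G.Adj a b) (hdom : ∀ w ∉ S, ∃ c ∈ S, G.Adj c w) :
    ConnDomSet G S :=
  ⟨⟨a, ha⟩, induce_connected_of_forall_adj (Finset.mem_coe.2 ha) hstar, hdom⟩

theorem connDomSet_insert_of_forall_adj [DecidableEq V] {S : Finset V} {a : V}
    (hS : ∀ c ∈ S, G.Adj a c) (hdom : ∀ w ∉ S, ∃ c ∈ S, G.Adj c w) :
    ConnDomSet G (insert a S) := by
  refine connDomSet_of_forall_adj (Finset.mem_insert_self a S) (fun b hb hba => ?_)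
    (fun w hw => ?_)
  · exact hS b ((Finset.mem_insert.1 hb).resolve_left hba)
  · obtain ⟨c, hc, hcw⟩ := hdom w fun h => hw (Finset.mem_insert_of_mem h)
    exact ⟨c, Finset.mem_insert_of_mem hc, hcw⟩

theorem connDomSet_compl_triple [DecidableEq V] {u v x : V} (huv : u ≠ v) (hadj : ¬ G.Adj u v)
    (hx : ∀ c, G.Adj u c → G.Adj v c → Gᶜ.Adj x c) : ConnDomSet Gᶜ {u, v, x} := by
  have hcuv : Gᶜ.Adj u v := ⟨huv, hadj⟩
  have hdom : ∀ w ∉ ({u, v, x} : Finset V), ∃ c ∈ ({u, v, x} : Finset V), Gᶜ.Adj c w := by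
    intro w hw
    simp only [Finset.mem_insert, Finset.mem_singleton, not_or] at hw
    by_cases hu : G.Adj u w
    · by_cases hv : G.Adj v w
      · exact ⟨x, by simp, hx w hu hv⟩
      · exact ⟨v, by simp, Ne.symm hw.2.1, hv⟩
    · exact ⟨u, by simp, Ne.symm hw.1, hu⟩
  by_cases hux : G.Adj u x
  · have hvx : ¬ G.Adj v x := fun hvx => (hx x hux hvx).ne rfl
    refine connDomSet_of_forall_adj (a := v) (by simp) (fun b hb hbv => ?_) hdom
    simp only [Finset.mem_insert, Finset.mem_singleton] at hb
    rcases hb with rfl | rfl | rfl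
    · exact hcuv.symm
    · exact absurd rfl hbv
    · exact ⟨Ne.symm hbv, hvx⟩
  · refine connDomSet_of_forall_adj (a := u) (by simp) (fun b hb hbu => ?_) hdom
    simp only [Finset.mem_insert, Finset.mem_singleton] at hb
    rcases hb with rfl | rfl | rfl
    · exact absurd rfl hbu
    · exact hcuv
    · exact ⟨Ne.symm hbu, hux⟩

end SimpleGraph

open SimpleGraph in
theorem stmt0 {V : Type*} [Fintype V] [DecidableEq V] (G : SimpleGraph V)
    [DecidableRel G.Adj] (hG : ¬ Compliant G 3) (u v : V) (huv : u ≠ v)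
    (hadj : ¬ G.Adj u v) :
    3 ≤ (G.neighborFinset u ∩ G.neighborFinset v).card := by
  by_contra hcard
  set C := G.neighborFinset u ∩ G.neighborFinset v
  have hmemC {c : V} : c ∈ C ↔ G.Adj u c ∧ G.Adj v c := by simp [C]
  apply hG
  by_cases hx : ∃ x, ∀ c ∈ C, Gᶜ.Adj x c
  · obtain ⟨x, hx⟩ := hx
    exact Or.inr ⟨{u, v, x}, Finset.card_le_three,
      connDomSet_compl_triple huv hadj fun c hu hv => hx c (hmemC.2 ⟨hu, hv⟩)⟩
  · push Not at hx
    have hdom : ∀ w ∉ C, ∃ c ∈ C, G.Adj c w := fun w hw => by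
      obtain ⟨c, hc, hwc⟩ := hx w
      exact ⟨c, hc, by simpa [compl_adj, (ne_of_mem_of_not_mem hc hw).symm, adj_comm] using hwc⟩
    exact Or.inl ⟨insert u C, (Finset.card_insert_le u C).trans (by omega),
      connDomSet_insert_of_forall_adj (fun c hc => (hmemC.1 hc).1) hdom⟩
end

section
/- The Paley graph QR₁₃ is 3-non-compliant; that is, neither QR₁₃ nor its complement has a connected dominating set of cardinality at most 3. -/
def QR13 : SimpleGraph (ZMod 13) where
  Adj x y := x ≠ y ∧ IsSquare (x - y)
  symm := by
    constructor
    rintro x y ⟨hxy, z, hz⟩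
    refine ⟨hxy.symm, 5 * z, ?_⟩
    have h25 : (25 : ZMod 13) = -1 := by decide
    calc y - x = -(x - y) := by ring
      _ = -(z * z) := by rw [hz]
      _ = 25 * (z * z) := by rw [h25]; ring
      _ = 5 * z * (5 * z) := by ring
  loopless := by
    constructor
    rintro x ⟨hx, -⟩
    exact hx rfl

theorem SimpleGraph.Connected.exists_forall_adj_of_card_le_three {W : Type*} [Fintype W]
    {H : SimpleGraph W} (hH : H.Connected) (hcard : Fintype.card W ≤ 3) :
    ∃ c, ∀ v, v ≠ c → H.Adj c v := by
  classical
  obtain ⟨u⟩ := hH.nonempty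
  by_cases hu : ∀ v, v ≠ u → H.Adj u v
  · exact ⟨u, hu⟩
  push Not at hu
  obtain ⟨v, hvu, huv⟩ := hu
  -- a path has fewer vertices than `W`, so a path from `u` to its non-neighbour `v` has length 2
  obtain ⟨p, hp⟩ := (hH u v).some.toPath
  have hlen : p.length ≤ 2 := by have := hp.length_lt; omega
  obtain ⟨w, huw, hwv⟩ : ∃ w, H.Adj u w ∧ H.Adj w v := by
    match p, hlen with
    | .nil, _ => exact absurd rfl hvu
    | .cons h .nil, _ => exact absurd h huv
    | .cons h₁ (.cons h₂ .nil), _ => exact ⟨_, h₁, h₂⟩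
  have huniv : ({u, w, v} : Finset W) = Finset.univ :=
    Finset.eq_univ_of_card _ <| le_antisymm (Finset.card_le_univ _) <| hcard.trans_eq
      (Finset.card_eq_three.2 ⟨u, w, v, huw.ne, hvu.symm, hwv.ne, rfl⟩).symm
  refine ⟨w, fun x hxw => ?_⟩
  have hx : x ∈ ({u, w, v} : Finset W) := huniv ▸ Finset.mem_univ x
  simp only [Finset.mem_insert, Finset.mem_singleton] at hx
  rcases hx with rfl | rfl | rfl
  exacts [huw.symm, absurd rfl hxw, hwv]

theorem Finset.exists_eq_insert_insert_of_card_le_three {α : Type*} [DecidableEq α]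
    {S : Finset α} {c : α} (hc : c ∈ S) (hcard : S.card ≤ 3) :
    ∃ a ∈ S, ∃ b ∈ S, S = {c, a, b} := by
  rw [← Finset.insert_erase hc] at hcard ⊢
  rw [Finset.card_insert_of_notMem (Finset.notMem_erase c S)] at hcard
  obtain h | h | h : (S.erase c).card = 0 ∨ (S.erase c).card = 1 ∨ (S.erase c).card = 2 := by
    omega
  · rw [Finset.card_eq_zero.1 h]
    exact ⟨c, by simp, c, by simp, by simp⟩
  · obtain ⟨a, ha⟩ := Finset.card_eq_one.1 h
    rw [ha]
    exact ⟨a, by simp, a, by simp, by simp⟩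
  · obtain ⟨a, b, -, hab⟩ := Finset.card_eq_two.1 h
    rw [hab]
    exact ⟨a, by simp, b, by simp, rfl⟩

namespace SimpleGraph

variable {V : Type*}

def Dominates (G : SimpleGraph V) (T : Finset V) : Prop :=
  ∀ v, ∃ u ∈ T, u = v ∨ G.Adj u v

instance [Fintype V] [DecidableEq V] (G : SimpleGraph V) [DecidableRel G.Adj] (T : Finset V) :
    Decidable (G.Dominates T) :=
  inferInstanceAs (Decidable (∀ v, ∃ u ∈ T, u = v ∨ G.Adj u v))

def IsTranslationInvariant [Add V] (G : SimpleGraph V) : Prop :=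
  ∀ x y t : V, G.Adj (x + t) (y + t) ↔ G.Adj x y

variable [AddGroup V] {G : SimpleGraph V}

theorem IsTranslationInvariant.compl (hG : G.IsTranslationInvariant) :
    Gᶜ.IsTranslationInvariant := fun x y t => by
  simp [hG x y t]

theorem Dominates.image_sub_right [DecidableEq V] (hG : G.IsTranslationInvariant)
    {T : Finset V} (hT : G.Dominates T) (c : V) : G.Dominates (T.image (· - c)) := by
  intro v
  obtain ⟨u, hu, huv⟩ := hT (v + c)
  refine ⟨u - c, Finset.mem_image_of_mem _ hu, ?_⟩
  rcases huv with rfl | huv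
  · exact Or.inl (add_sub_cancel_right v c)
  · exact Or.inr (by simpa [sub_eq_add_neg] using (hG u (v + c) (-c)).2 huv)

end SimpleGraph

open SimpleGraph

namespace ConnDomSet

variable {V : Type*} [DecidableEq V] {G : SimpleGraph V} {S : Finset V}

theorem exists_dominates_closedNbhd_triple (hS : ConnDomSet G S) (hcard : S.card ≤ 3) :
    ∃ c a b, (a = c ∨ G.Adj c a) ∧ (b = c ∨ G.Adj c b) ∧ G.Dominates {c, a, b} := by
  obtain ⟨-, hconn, hdom⟩ := hS
  obtain ⟨⟨c, hc⟩, hcenter⟩ := hconn.exists_forall_adj_of_card_le_three (by simpa using hcard)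
  have hnbhd : ∀ x ∈ S, x = c ∨ G.Adj c x := fun x hx =>
    or_iff_not_imp_left.2 fun hxc => hcenter ⟨x, hx⟩ (Subtype.coe_ne_coe.1 hxc)
  obtain ⟨a, ha, b, hb, rfl⟩ := Finset.exists_eq_insert_insert_of_card_le_three hc hcard
  refine ⟨c, a, b, hnbhd a ha, hnbhd b hb, fun v => ?_⟩
  by_cases hv : v ∈ ({c, a, b} : Finset V)
  · exact ⟨v, hv, Or.inl rfl⟩
  · obtain ⟨u, hu, huv⟩ := hdom v hv
    exact ⟨u, hu, Or.inr huv⟩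

theorem exists_dominates_zero_triple [AddGroup V] (hG : G.IsTranslationInvariant)
    (hS : ConnDomSet G S) (hcard : S.card ≤ 3) :
    ∃ a b, (a = 0 ∨ G.Adj 0 a) ∧ (b = 0 ∨ G.Adj 0 b) ∧ G.Dominates {0, a, b} := by
  obtain ⟨c, a, b, ha, hb, hdom⟩ := hS.exists_dominates_closedNbhd_triple hcard
  have hshift : ∀ x, x = c ∨ G.Adj c x → x - c = 0 ∨ G.Adj 0 (x - c) := by
    rintro x (rfl | hx)
    · exact Or.inl (sub_self x)
    · exact Or.inr (by simpa [sub_eq_add_neg] using (hG c x (-c)).2 hx)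
  refine ⟨a - c, b - c, hshift a ha, hshift b hb, ?_⟩
  simpa [Finset.image_insert] using hdom.image_sub_right hG c

end ConnDomSet

theorem QR13_isTranslationInvariant : QR13.IsTranslationInvariant := by
  simp [IsTranslationInvariant, QR13]

instance : DecidableRel QR13.Adj := fun x y =>
  inferInstanceAs (Decidable (x ≠ y ∧ IsSquare (x - y)))

theorem QR13_not_dominates_zero_triple (a b : ZMod 13) (ha : a = 0 ∨ QR13.Adj 0 a)
    (hb : b = 0 ∨ QR13.Adj 0 b) : ¬QR13.Dominates {0, a, b} := by
  revert a b; decide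

theorem QR13_compl_not_dominates_zero_triple (a b : ZMod 13) (ha : a = 0 ∨ QR13ᶜ.Adj 0 a)
    (hb : b = 0 ∨ QR13ᶜ.Adj 0 b) : ¬QR13ᶜ.Dominates {0, a, b} := by
  revert a b; decide

theorem stmt3 : ¬ Compliant QR13 3 := by
  rintro (⟨S, hcard, hS⟩ | ⟨S, hcard, hS⟩)
  · obtain ⟨a, b, ha, hb, hdom⟩ :=
      hS.exists_dominates_zero_triple QR13_isTranslationInvariant hcard
    exact QR13_not_dominates_zero_triple a b ha hb hdom
  · obtain ⟨a, b, ha, hb, hdom⟩ :=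
      hS.exists_dominates_zero_triple QR13_isTranslationInvariant.compl hcard
    exact QR13_compl_not_dominates_zero_triple a b ha hb hdom
end

section
/- Let G be a finite simple graph, let k ≥ 2, and let u and v be distinct vertices of G that are twins, meaning N_G(u) \ {v} = N_G(v) \ {u}. Then G is k-non-compliant if and only if the induced subgraph G − v (obtained by deleting the vertex v) is k-non-compliant. -/
/-!
Twins of a graph are also twins of its complement, and deleting `v` commutes with
complementation, so it suffices to compare the connected dominating sets of a graph `H` and of
`H - v` for twins `u, v` of `H`. Replacing `v` by `u` turns a connected dominating set of `H` into
one of `H - v` that is no larger. Conversely, a connected dominating set `T` of `H - v` also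
dominates `v` unless `T = {u}`; in that case a neighbour `y` of `u` gives the connected
dominating set `{u, y}` of `H`, of size `2 ≤ k`, and if `u` is isolated then `{u}` is a connected
dominating set of `Hᶜ`.
-/

namespace SimpleGraph

variable {V W : Type*} {G : SimpleGraph V}

theorem Reachable.map_of_eq_or_adj {G' : SimpleGraph W} (f : V → W)
    (hf : ∀ a b, G.Adj a b → f a = f b ∨ G'.Adj (f a) (f b)) {a b : V}
    (h : G.Reachable a b) : G'.Reachable (f a) (f b) := by
  rw [reachable_iff_reflTransGen] at h ⊢
  refine h.lift' f fun a b hab => ?_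
  rcases hf a b hab with e | e
  · simp only [Function.onFun, e, Relation.ReflTransGen.refl]
  · exact .single e

theorem Connected.map_of_eq_or_adj {G' : SimpleGraph W} (hG : G.Connected) (f : V → W)
    (hsurj : Function.Surjective f) (hf : ∀ a b, G.Adj a b → f a = f b ∨ G'.Adj (f a) (f b)) :
    G'.Connected := by
  have : Nonempty W := hG.nonempty.map f
  refine ⟨fun x y => ?_⟩
  obtain ⟨a, rfl⟩ := hsurj x
  obtain ⟨b, rfl⟩ := hsurj y
  exact (hG a b).map_of_eq_or_adj f hf

theorem connected_induce_image {s : Set V} (hs : (G.induce s).Connected) (f : V → V)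
    (hf : ∀ a ∈ s, ∀ b ∈ s, G.Adj a b → f a = f b ∨ G.Adj (f a) (f b)) :
    (G.induce (f '' s)).Connected :=
  hs.map_of_eq_or_adj (fun a => ⟨f a, Set.mem_image_of_mem f a.2⟩)
    (by rintro ⟨_, a, ha, rfl⟩; exact ⟨⟨a, ha⟩, rfl⟩)
    (fun a b hab => (hf a a.2 b b.2 hab).imp Subtype.ext id)

noncomputable def induceInduceIso (s : Set V) (t : Set s) :
    (G.induce s).induce t ≃g G.induce (Subtype.val '' t) where
  toEquiv := Equiv.Set.image _ t Subtype.val_injective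
  map_rel_iff' := Iff.rfl

theorem compl_induce (s : Set V) : (G.induce s)ᶜ = Gᶜ.induce s := by
  ext a b
  simp [Subtype.ext_iff]

def AreTwins (G : SimpleGraph V) (u v : V) : Prop :=
  ∀ w, w ≠ u → w ≠ v → (G.Adj u w ↔ G.Adj v w)

theorem areTwins_of_neighborSet_sdiff_eq {u v : V}
    (h : G.neighborSet u \ {v} = G.neighborSet v \ {u}) : G.AreTwins u v := by
  intro w hwu hwv
  simpa [hwu, hwv] using Set.ext_iff.mp h w

theorem AreTwins.compl {u v : V} (h : G.AreTwins u v) : Gᶜ.AreTwins u v := by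
  intro w hwu hwv
  simp [h w hwu hwv, hwu.symm, hwv.symm]

theorem AreTwins.symm {u v : V} (h : G.AreTwins u v) : G.AreTwins v u :=
  fun w hwv hwu => (h w hwu hwv).symm

theorem AreTwins.adj_of_adj {u v w : V} (h : G.AreTwins u v) (hvw : G.Adj v w) (hwu : w ≠ u) :
    G.Adj u w :=
  (h w hwu hvw.ne').mpr hvw

theorem AreTwins.ite_eq_or_adj [DecidableEq V] {u v a b : V} (h : G.AreTwins u v)
    (hab : G.Adj a b) :
    (if a = v then u else a) = (if b = v then u else b) ∨
      G.Adj (if a = v then u else a) (if b = v then u else b) := by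
  by_cases ha : a = v <;> by_cases hb : b = v
  · exact absurd (ha.trans hb.symm) hab.ne
  · subst ha
    by_cases hbu : b = u
    · simp [hbu]
    · exact .inr (by simpa [hb] using h.adj_of_adj hab hbu)
  · subst hb
    by_cases hau : a = u
    · simp [hau]
    · exact .inr (by simpa [ha] using (h.adj_of_adj hab.symm hau).symm)
  · simp [ha, hb, hab]

end SimpleGraph

open SimpleGraph

section

variable {V : Type*} {H : SimpleGraph V}

theorem connDomSet_iff {S : Finset V} :
    ConnDomSet H S ↔
      (H.induce (S : Set V)).Connected ∧ ∀ w ∉ S, ∃ x ∈ S, H.Adj x w := by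
  refine ⟨fun h => h.2, fun h => ⟨?_, h⟩⟩
  obtain ⟨⟨x, hx⟩⟩ := h.1.nonempty
  exact ⟨x, hx⟩

theorem compliant_compl {k : ℕ} : Compliant Hᶜ k ↔ Compliant H k := by
  rw [Compliant, Compliant, compl_compl, or_comm]

theorem connDomSet_induce_iff {A : Set V} (S : Finset A) :
    ConnDomSet (H.induce A) S ↔
      (H.induce (S.map (.subtype _) : Set V)).Connected ∧
        ∀ w ∈ A, w ∉ S.map (.subtype _) → ∃ x ∈ S.map (.subtype _), H.Adj x w := by
  rw [connDomSet_iff, Finset.coe_map, Function.Embedding.coe_subtype,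
    ← (induceInduceIso A (S : Set A)).connected_iff]
  refine and_congr_right fun _ => ⟨fun h w hw hwS => ?_, fun h w hwS => ?_⟩
  · obtain ⟨x, hxS, hx⟩ := h ⟨w, hw⟩ (fun h => hwS (Finset.mem_map_of_mem _ h))
    exact ⟨x, Finset.mem_map_of_mem _ hxS, hx⟩
  · obtain ⟨_, hxT, hx⟩ := h w w.2 (by simpa using hwS)
    obtain ⟨x, hxS, rfl⟩ := Finset.mem_map.mp hxT
    exact ⟨x, hxS, hx⟩

theorem exists_connDomSet_induce_iff {A : Set V} {k : ℕ} :
    (∃ S : Finset A, S.card ≤ k ∧ ConnDomSet (H.induce A) S) ↔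
      ∃ T : Finset V, ↑T ⊆ A ∧ T.card ≤ k ∧ (H.induce (T : Set V)).Connected ∧
        ∀ w ∈ A, w ∉ T → ∃ x ∈ T, H.Adj x w := by
  classical
  constructor
  · rintro ⟨S, hSk, hS⟩
    refine ⟨S.map (.subtype _), ?_, by rwa [Finset.card_map], (connDomSet_induce_iff S).mp hS⟩
    rw [Finset.coe_map, Function.Embedding.coe_subtype]
    exact Set.image_subset_iff.mpr fun x _ => x.2
  · rintro ⟨T, hTA, hTk, hT⟩
    have hmap : (T.subtype (· ∈ A)).map (.subtype _) = T := Finset.subtype_map_of_mem hTA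
    refine ⟨T.subtype (· ∈ A), ?_, (connDomSet_induce_iff _).mpr ?_⟩
    · rwa [← Finset.card_map, hmap]
    · rwa [hmap]

theorem exists_connDomSet_induce_ne_of_areTwins [DecidableEq V] {k : ℕ} {u v : V} (huv : u ≠ v)
    (htw : H.AreTwins u v) (h : ∃ S : Finset V, S.card ≤ k ∧ ConnDomSet H S) :
    ∃ S : Finset {w | w ≠ v}, S.card ≤ k ∧ ConnDomSet (H.induce {w | w ≠ v}) S := by
  obtain ⟨S, hSk, hS⟩ := h
  obtain ⟨hconn, hdom⟩ := connDomSet_iff.mp hS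
  let σ : V → V := fun x => if x = v then u else x
  have hσv : ∀ x, σ x ≠ v := fun x => by by_cases hx : x = v <;> simp [σ, hx, huv]
  have hσ : ∀ x, x ≠ v → σ x = x := fun x hx => if_neg hx
  refine exists_connDomSet_induce_iff.mpr
    ⟨S.image σ, ?_, Finset.card_image_le.trans hSk, ?_, ?_⟩
  · simp [Set.subset_def, hσv]
  · rw [Finset.coe_image]
    exact connected_induce_image hconn σ fun a _ b _ => htw.ite_eq_or_adj
  · intro w hwv hwT
    have hwS : w ∉ S := fun h => hwT (hσ w hwv ▸ Finset.mem_image_of_mem σ h)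
    obtain ⟨x, hxS, hxw⟩ := hdom w hwS
    refine ⟨σ x, Finset.mem_image_of_mem σ hxS, ?_⟩
    by_cases hxv : x = v
    · subst hxv
      have huT : u ∈ S.image σ := by simpa [σ] using Finset.mem_image_of_mem σ hxS
      simpa [σ] using htw.adj_of_adj hxw (ne_of_mem_of_not_mem huT hwT).symm
    · rwa [hσ x hxv]

theorem eq_singleton_of_areTwins_of_forall_not_adj {u v : V} {T : Finset V} (huv : u ≠ v)
    (htw : H.AreTwins u v) (hvT : v ∉ T) (hconn : (H.induce (T : Set V)).Connected)
    (hdom : ∀ w, w ≠ v → w ∉ T → ∃ x ∈ T, H.Adj x w)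
    (hv : ∀ x ∈ T, ¬ H.Adj x v) :
    T = {u} := by
  have hu : ∀ x ∈ T, ¬ H.Adj u x := fun x hx hux =>
    hv x hx (htw.symm.adj_of_adj hux (ne_of_mem_of_not_mem hx hvT)).symm
  have huT : u ∈ T := by
    by_contra huT
    obtain ⟨x, hx, hxu⟩ := hdom u huv huT
    exact hu x hx hxu.symm
  refine Finset.eq_singleton_iff_unique_mem.mpr ⟨huT, fun x hx => ?_⟩
  by_contra hxu
  have : Nontrivial (T : Set V) := nontrivial_of_ne ⟨x, hx⟩ ⟨u, huT⟩ (by simpa using hxu)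
  obtain ⟨y, hy⟩ := hconn.preconnected.exists_adj_of_nontrivial ⟨u, huT⟩
  exact hu y y.2 hy

theorem compliant_of_connDomSet_induce_ne {k : ℕ} (hk : 2 ≤ k) {u v : V} (huv : u ≠ v)
    (htw : H.AreTwins u v) {S : Finset {w | w ≠ v}} (hSk : S.card ≤ k)
    (hS : ConnDomSet (H.induce {w | w ≠ v}) S) : Compliant H k := by
  classical
  obtain ⟨T, hTv, hTk, hconn, hdom⟩ := exists_connDomSet_induce_iff.mp ⟨S, hSk, hS⟩
  have hvT : v ∉ T := fun h => hTv h rfl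
  by_cases hv : ∃ x ∈ T, H.Adj x v
  · refine .inl ⟨T, hTk, connDomSet_iff.mpr ⟨hconn, fun w hw => ?_⟩⟩
    by_cases hwv : w = v
    · exact hwv ▸ hv
    · exact hdom w hwv hw
  push Not at hv
  obtain rfl := eq_singleton_of_areTwins_of_forall_not_adj huv htw hvT hconn hdom hv
  by_cases hu : ∃ y, H.Adj u y
  · obtain ⟨y, huy⟩ := hu
    have hyv : y ≠ v := fun h => hv u (Finset.mem_singleton_self u) (h ▸ huy)
    refine .inl ⟨{u, y}, Finset.card_le_two.trans hk,
      connDomSet_iff.mpr ⟨?_, fun w hw => ?_⟩⟩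
    · rw [Finset.coe_pair]
      exact induce_pair_connected_of_adj huy
    · rw [Finset.mem_insert, Finset.mem_singleton, not_or] at hw
      by_cases hwv : w = v
      · exact ⟨y, by simp, hwv ▸ (htw.symm.adj_of_adj huy hyv).symm⟩
      · obtain ⟨x, hx, hxw⟩ := hdom w hwv (by simpa using hw.1)
        exact ⟨x, by simp_all, hxw⟩
  · push Not at hu
    refine .inr ⟨{u}, by simp; omega, connDomSet_iff.mpr ⟨?_, fun w hw => ?_⟩⟩
    · rw [Finset.coe_singleton, induce_singleton_eq_top]
      exact connected_top_iff.mpr inferInstance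
    · refine ⟨u, Finset.mem_singleton_self u, (compl_adj H u w).mpr ⟨?_, hu w⟩⟩
      simpa [eq_comm] using hw

end

theorem stmt5_general {V : Type*} (G : SimpleGraph V)
    (k : ℕ) (hk : 2 ≤ k) (u v : V) (huv : u ≠ v)
    (htwin : G.neighborSet u \ {v} = G.neighborSet v \ {u}) :
    ¬ Compliant G k ↔ ¬ Compliant (G.induce {w : V | w ≠ v}) k := by
  classical
  have htw := areTwins_of_neighborSet_sdiff_eq htwin
  refine not_congr ⟨fun h => ?_, fun h => ?_⟩
  · rw [Compliant, compl_induce]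
    exact h.imp (exists_connDomSet_induce_ne_of_areTwins huv htw)
      (exists_connDomSet_induce_ne_of_areTwins huv htw.compl)
  · rw [Compliant, compl_induce] at h
    rcases h with ⟨S, hSk, hS⟩ | ⟨S, hSk, hS⟩
    · exact compliant_of_connDomSet_induce_ne hk huv htw hSk hS
    · exact compliant_compl.mp (compliant_of_connDomSet_induce_ne hk huv htw.compl hSk hS)

theorem stmt5 {V : Type*} [Fintype V] [DecidableEq V] (G : SimpleGraph V)
    (k : ℕ) (hk : 2 ≤ k) (u v : V) (huv : u ≠ v)
    (htwin : G.neighborSet u \ {v} = G.neighborSet v \ {u}) :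
    ¬ Compliant G k ↔ ¬ Compliant (G.induce {w : V | w ≠ v}) k :=
  stmt5_general G k hk u v huv htwin
end

section
/- Let G be a finite simple graph on exactly 14 vertices and let u be a vertex of G with degree 6. If G is 3-non-compliant, then the sum of the degrees (in G) of the neighbors of u is at least 39, i.e. ∑_{v ∈ N_G(u)} deg_G(v) ≥ 39. -/
open Finset

namespace SimpleGraph

variable {V : Type*} {G : SimpleGraph V}

lemma induce_connected_of_forall_adj_s6 {s : Set V} {c : V} (hc : c ∈ s)
    (hadj : ∀ v ∈ s, v ≠ c → G.Adj c v) : (G.induce s).Connected := by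
  rw [connected_iff_exists_forall_reachable]
  refine ⟨⟨c, hc⟩, fun ⟨v, hv⟩ => ?_⟩
  by_cases hvc : v = c
  · subst hvc; rfl
  · exact Adj.reachable (by simpa using hadj v hv hvc)

lemma compliant_compl {k : ℕ} : Compliant Gᶜ k ↔ Compliant G k := by
  unfold Compliant
  rw [compl_compl, or_comm]

lemma exists_common_nonneighbor_of_not_compliant (hG : ¬Compliant G 3) {c a b : V}
    (ha : G.Adj c a) (hb : G.Adj c b) :
    ∃ x, x ≠ c ∧ ¬G.Adj c x ∧ ¬G.Adj a x ∧ ¬G.Adj b x := by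
  classical
  set S : Finset V := {c, a, b}
  have hconn : (G.induce (S : Set V)).Connected := by
    refine induce_connected_of_forall_adj_s6 (c := c) (by simp [S]) fun v hv hvc => ?_
    simp only [S, coe_insert, coe_singleton, Set.mem_insert_iff, Set.mem_singleton_iff] at hv
    rcases hv with rfl | rfl | rfl
    exacts [absurd rfl hvc, ha, hb]
  have hdom : ¬∀ v ∉ S, ∃ y ∈ S, G.Adj y v :=
    fun hdom => hG (Or.inl ⟨S, card_le_three, ⟨c, by simp [S]⟩, hconn, hdom⟩)
  push Not at hdom
  obtain ⟨x, hxS, hx⟩ := hdom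
  simp only [S, mem_insert, mem_singleton, not_or] at hxS
  exact ⟨x, hxS.1, hx c (by simp [S]), hx a (by simp [S]), hx b (by simp [S])⟩

lemma exists_common_neighbor_of_not_compliant (hG : ¬Compliant G 3) {c a b : V}
    (ha : Gᶜ.Adj c a) (hb : Gᶜ.Adj c b) : ∃ x, G.Adj c x ∧ G.Adj a x ∧ G.Adj b x := by
  obtain ⟨x, hxc, hcx, hax, hbx⟩ :=
    exists_common_nonneighbor_of_not_compliant (compliant_compl.not.mpr hG) ha hb
  have hax' : a ≠ x := by rintro rfl; exact hcx ha
  have hbx' : b ≠ x := by rintro rfl; exact hcx hb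
  simp only [compl_adj, not_and, not_not] at hcx hax hbx
  exact ⟨x, hcx (Ne.symm hxc), hax hax', hbx hbx'⟩

section NotCompliant

variable (hG : ¬Compliant G 3) {u : V}
include hG

lemma exists_common_neighbor_ne_of_adj {v w : V} (hv : G.Adj u v) (hw : G.Adj u w) :
    ∃ x, G.Adj u x ∧ G.Adj v x ∧ x ≠ w := by
  obtain ⟨m, hmu, hum, hvm, hwm⟩ := exists_common_nonneighbor_of_not_compliant hG hv hw
  have hmv : m ≠ v := by rintro rfl; exact hum hv
  obtain ⟨x, hmx, hux, hvx⟩ := exists_common_neighbor_of_not_compliant hG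
    (c := m) (a := u) (b := v) ⟨hmu, fun h => hum h.symm⟩ ⟨hmv, fun h => hvm h.symm⟩
  exact ⟨x, hux, hvx, by rintro rfl; exact hwm hmx.symm⟩

lemma exists_common_neighbor_ne_of_compl_adj {m w w' : V} (hm : Gᶜ.Adj u m)
    (hw : G.Adj u w) (hw' : G.Adj u w') :
    ∃ x, G.Adj u x ∧ G.Adj m x ∧ x ≠ w ∧ x ≠ w' := by
  obtain ⟨y, hyu, huy, hwy, hw'y⟩ := exists_common_nonneighbor_of_not_compliant hG hw hw'
  obtain ⟨x, hux, hmx, hyx⟩ :=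
    exists_common_neighbor_of_not_compliant hG hm (b := y) ⟨Ne.symm hyu, huy⟩
  exact ⟨x, hux, hmx, by rintro rfl; exact hwy hyx.symm, by rintro rfl; exact hw'y hyx.symm⟩

variable [Fintype V] [DecidableEq V] [DecidableRel G.Adj]

lemma two_le_card_inter_neighborFinset_of_adj {v : V} (hv : G.Adj u v) :
    2 ≤ #(G.neighborFinset u ∩ G.neighborFinset v) := by
  obtain ⟨x, hux, hvx, -⟩ := exists_common_neighbor_ne_of_adj hG hv hv
  obtain ⟨y, huy, hvy, hyx⟩ := exists_common_neighbor_ne_of_adj hG hv hux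
  exact one_lt_card.mpr ⟨x, by simp [hux, hvx], y, by simp [huy, hvy], hyx.symm⟩

lemma three_le_card_inter_neighborFinset_of_compl_adj {m : V} (hm : Gᶜ.Adj u m) :
    3 ≤ #(G.neighborFinset u ∩ G.neighborFinset m) := by
  obtain ⟨x, hux, hmx, -⟩ := exists_common_neighbor_of_not_compliant hG hm hm
  obtain ⟨y, huy, hmy, hyx, -⟩ := exists_common_neighbor_ne_of_compl_adj hG hm hux hux
  obtain ⟨z, huz, hmz, hzx, hzy⟩ := exists_common_neighbor_ne_of_compl_adj hG hm hux huy
  exact two_lt_card.mpr ⟨x, by simp [hux, hmx], y, by simp [huy, hmy], z, by simp [huz, hmz],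
    hyx.symm, hzx.symm, hzy.symm⟩

end NotCompliant

variable [Fintype V] [DecidableRel G.Adj]

lemma sum_degree_neighborFinset [DecidableEq V] (u : V) :
    ∑ v ∈ G.neighborFinset u, G.degree v =
      ∑ x, #(G.neighborFinset u ∩ G.neighborFinset x) := by
  have := sum_card_bipartiteAbove_eq_sum_card_bipartiteBelow (s := G.neighborFinset u)
    (t := univ) (r := G.Adj)
  convert this using 2 with v _ x
  · rw [← card_neighborFinset_eq_degree, neighborFinset_eq_filter]
    rfl
  · congr 1
    ext y
    simp [adj_comm]

lemma sum_univ_eq_add_sum_neighborFinset_add_sum_neighborFinset_compl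
    [DecidableEq V] {M : Type*} [AddCommMonoid M] (f : V → M) (u : V) :
    ∑ x, f x = f u + ∑ x ∈ G.neighborFinset u, f x + ∑ x ∈ Gᶜ.neighborFinset u, f x := by
  have hsub : G.neighborFinset u ⊆ univ.erase u := fun x hx => by
    simpa using (G.ne_of_adj ((G.mem_neighborFinset u x).mp hx)).symm
  have hcompl : Gᶜ.neighborFinset u = univ.erase u \ G.neighborFinset u := by
    ext x
    simp [ne_comm, and_comm]
  rw [← add_sum_erase _ _ (mem_univ u), ← sum_sdiff hsub, hcompl, add_assoc,
    add_comm (∑ x ∈ _ \ _, f x)]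

theorem three_mul_card_sub_one_le_sum_degree_neighborFinset (hG : ¬Compliant G 3) (u : V) :
    3 * (Fintype.card V - 1) ≤ ∑ v ∈ G.neighborFinset u, G.degree v := by
  classical
  set f : V → ℕ := fun x => #(G.neighborFinset u ∩ G.neighborFinset x)
  have hN : G.degree u * 2 ≤ ∑ x ∈ G.neighborFinset u, f x := by
    simpa using card_nsmul_le_sum _ f 2 fun x hx =>
      two_le_card_inter_neighborFinset_of_adj hG ((G.mem_neighborFinset u x).mp hx)
  have hM : Gᶜ.degree u * 3 ≤ ∑ x ∈ Gᶜ.neighborFinset u, f x := by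
    simpa using card_nsmul_le_sum _ f 3 fun x hx =>
      three_le_card_inter_neighborFinset_of_compl_adj hG ((Gᶜ.mem_neighborFinset u x).mp hx)
  have hu : f u = G.degree u := by simp [f]
  have hcompl := G.degree_compl (v := u)
  have hdeg := G.degree_lt_card_verts u
  rw [sum_degree_neighborFinset,
    sum_univ_eq_add_sum_neighborFinset_add_sum_neighborFinset_compl (G := G) f u, hu]
  omega

end SimpleGraph

theorem stmt6_general {V : Type*} [Fintype V] (G : SimpleGraph V)
    [DecidableRel G.Adj] (hV : Fintype.card V = 14) (u : V)
    (hG : ¬ Compliant G 3) :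
    39 ≤ ∑ v ∈ G.neighborFinset u, G.degree v := by
  simpa [hV] using G.three_mul_card_sub_one_le_sum_degree_neighborFinset hG u

theorem stmt6 {V : Type*} [Fintype V] [DecidableEq V] (G : SimpleGraph V)
    [DecidableRel G.Adj] (hV : Fintype.card V = 14) (u : V)
    (hdeg : G.degree u = 6) (hG : ¬ Compliant G 3) :
    39 ≤ ∑ v ∈ G.neighborFinset u, G.degree v :=
  stmt6_general G hV u hG
end

section
/- Let G be a 3-non-compliant finite simple graph on exactly 14 vertices, and let u and v be non-adjacent vertices of G with deg_G(u) = deg_G(v) = 7. Then u and v have at least 4 common neighbors in G, i.e. |N_G(u) ∩ N_G(v)| ≥ 4. -/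
/-!
Let `I` be the set of common neighbours of `u` and `v`, and `F` the set of vertices equal or
adjacent to neither. Counting gives `#F + 2 = #I`, so `#I ≤ 3` forces `#F ≤ 1`. If some
`d ∈ I` is adjacent to all of `F`, then `u - d - v` is a connected dominating set of `G`.
Otherwise `F = {r}` and `r` is adjacent to no vertex of `I`; then `v - u - r` is a connected
dominating set of the complement, since in `Gᶜ` the vertex `v` dominates the non-neighbours of
`v`, `u` those of `u`, and `r` the common neighbours.
-/

open Finset

section

variable {V : Type*}

lemma connDomSet_of_adj_of_adj [DecidableEq V] {G : SimpleGraph V} {a x b : V}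
    (hax : G.Adj a x) (hxb : G.Adj x b)
    (hdom : ∀ w ∉ ({a, x, b} : Finset V), G.Adj a w ∨ G.Adj x w ∨ G.Adj b w) :
    ConnDomSet G {a, x, b} := by
  refine ⟨⟨a, by simp⟩, ?_, fun w hw => ?_⟩
  · have hpath : (({a, x, b} : Finset V) : Set V) = {a, x} ∪ {x, b} := by
      ext; simp; tauto
    rw [hpath]
    exact SimpleGraph.induce_union_connected
      (SimpleGraph.induce_pair_connected_of_adj hax).preconnected
      (SimpleGraph.induce_pair_connected_of_adj hxb).preconnected ⟨x, by simp⟩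
  · rcases hdom w hw with h | h | h <;> exact ⟨_, by simp, h⟩

variable [Fintype V] [DecidableEq V] (G : SimpleGraph V) [DecidableRel G.Adj]

def farFinset (u v : V) : Finset V :=
  {w | w ≠ u ∧ w ≠ v ∧ ¬G.Adj u w ∧ ¬G.Adj v w}

@[simp]
lemma mem_farFinset {u v w : V} :
    w ∈ farFinset G u v ↔ w ≠ u ∧ w ≠ v ∧ ¬G.Adj u w ∧ ¬G.Adj v w := by
  simp [farFinset]

lemma card_farFinset_add_degree_add_degree {u v : V} (huv : u ≠ v) (hadj : ¬G.Adj u v) :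
    #(farFinset G u v) + G.degree u + G.degree v + 2 =
      Fintype.card V + #(G.neighborFinset u ∩ G.neighborFinset v) := by
  have hfar : farFinset G u v =
      (insert u (insert v (G.neighborFinset u ∪ G.neighborFinset v)))ᶜ := by
    ext w
    simp only [mem_farFinset, mem_compl, mem_insert, mem_union, SimpleGraph.mem_neighborFinset]
    tauto
  have hu : u ∉ insert v (G.neighborFinset u ∪ G.neighborFinset v) := by
    simp [huv, hadj, G.adj_comm v u]
  have hv : v ∉ G.neighborFinset u ∪ G.neighborFinset v := by simp [hadj]
  have hunion := card_union_add_card_inter (G.neighborFinset u) (G.neighborFinset v)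
  have hle := card_le_univ (insert u (insert v (G.neighborFinset u ∪ G.neighborFinset v)))
  rw [card_insert_of_notMem hu, card_insert_of_notMem hv] at hle
  rw [G.card_neighborFinset_eq_degree, G.card_neighborFinset_eq_degree] at hunion
  rw [hfar, card_compl, card_insert_of_notMem hu, card_insert_of_notMem hv]
  omega

lemma compliant_of_forall_adj_farFinset {u v d : V} (hud : G.Adj u d) (hvd : G.Adj v d)
    (hd : ∀ w ∈ farFinset G u v, G.Adj d w) : Compliant G 3 := by
  refine Or.inl ⟨{u, d, v}, card_le_three, connDomSet_of_adj_of_adj hud hvd.symm ?_⟩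
  intro w hw
  simp only [mem_insert, mem_singleton, not_or] at hw
  by_cases hfar : w ∈ farFinset G u v
  · exact Or.inr (Or.inl (hd w hfar))
  · simp only [mem_farFinset, hw, ne_eq, not_false_eq_true, true_and, not_and_or,
      not_not] at hfar
    tauto

lemma compliant_of_mem_farFinset {u v r : V} (huv : u ≠ v) (hadj : ¬G.Adj u v)
    (hr : r ∈ farFinset G u v) (hr' : ∀ d, G.Adj u d → G.Adj v d → ¬G.Adj d r) :
    Compliant G 3 := by
  obtain ⟨hru, -, hur, -⟩ := (mem_farFinset G).mp hr
  refine Or.inr ⟨{v, u, r}, card_le_three, connDomSet_of_adj_of_adj ?_ ?_ ?_⟩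
  · simpa [G.adj_comm v u] using ⟨huv.symm, hadj⟩
  · simpa using ⟨hru.symm, hur⟩
  · intro w hw
    simp only [mem_insert, mem_singleton, not_or] at hw
    obtain ⟨hwv, hwu, hwr⟩ := hw
    simp only [SimpleGraph.compl_adj, ne_eq, Ne.symm hwv, Ne.symm hwu, Ne.symm hwr,
      not_false_eq_true, true_and]
    by_contra! h
    exact hr' w h.2.1 h.1 (G.adj_symm h.2.2)

end

theorem stmt7 {V : Type*} [Fintype V] [DecidableEq V] (G : SimpleGraph V)
    [DecidableRel G.Adj] (hV : Fintype.card V = 14) (hG : ¬ Compliant G 3)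
    (u v : V) (huv : u ≠ v) (hadj : ¬ G.Adj u v)
    (hdu : G.degree u = 7) (hdv : G.degree v = 7) :
    4 ≤ (G.neighborFinset u ∩ G.neighborFinset v).card := by
  by_contra! hlt
  have hcount := card_farFinset_add_degree_add_degree G huv hadj
  rw [hdu, hdv, hV] at hcount
  obtain ⟨d, hd⟩ : (G.neighborFinset u ∩ G.neighborFinset v).Nonempty :=
    card_pos.mp (by omega)
  by_cases hdom : ∃ d ∈ G.neighborFinset u ∩ G.neighborFinset v,
      ∀ w ∈ farFinset G u v, G.Adj d w
  · obtain ⟨c, hc, hcF⟩ := hdom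
    simp only [mem_inter, SimpleGraph.mem_neighborFinset] at hc
    exact hG (compliant_of_forall_adj_farFinset G hc.1 hc.2 hcF)
  · push Not at hdom
    obtain ⟨r, hr, -⟩ := hdom d hd
    refine hG (compliant_of_mem_farFinset G huv hadj hr fun d' hud hvd => ?_)
    obtain ⟨r', hr', hd'r'⟩ := hdom d' (by simp [hud, hvd])
    rwa [card_le_one.mp (by omega) r hr r' hr']
end

section
/- Every finite simple graph G on exactly 14 vertices whose number of edges is 42, 43, or 44 is 3-compliant; that is, G or its complement has a connected dominating set of cardinality at most 3. -/
/-!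
Suppose neither `G` nor `Gᶜ` has a connected dominating set of size at most 3. If `T` is a set
of at most two neighbours of `v`, then `insert v T` is connected, hence not dominating: some
vertex is adjacent to none of its members, and dually in `Gᶜ`. Playing these two facts against
each other shows that adjacent vertices have at least 2 common neighbours, non-adjacent ones at
least 3, and that every vertex has degree at least 6 in `G` and in `Gᶜ`, so degree 6 or 7 in `G`.
Counting common neighbours of `v` then gives `∑_{u ∼ v} deg u ≥ 39` for every `v`, and summing
over `v` forces `|E(G)| ≥ 45`.
-/

open Finset SimpleGraph

namespace SimpleGraph

variable {V : Type*} {G : SimpleGraph V} {k : ℕ}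

section Counting

variable [Fintype V] [DecidableRel G.Adj]

theorem sum_sum_neighborFinset {M : Type*} [AddCommMonoid M] (f : V → M) :
    ∑ v, ∑ u ∈ G.neighborFinset v, f u = ∑ u, G.degree u • f u := by
  simp_rw [neighborFinset_eq_filter (G := G), sum_filter]
  rw [sum_comm]
  refine sum_congr rfl fun u _ => ?_
  rw [← sum_filter, sum_const, ← card_neighborFinset_eq_degree, neighborFinset_eq_filter]
  simp_rw [adj_comm]

variable [DecidableEq V] in
theorem sum_card_inter_neighborFinset (v : V) :
    ∑ w, #(G.neighborFinset v ∩ G.neighborFinset w) = ∑ u ∈ G.neighborFinset v, G.degree u := by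
  have hcard : ∀ w, #(G.neighborFinset v ∩ G.neighborFinset w) =
      ∑ u ∈ G.neighborFinset w, if u ∈ G.neighborFinset v then 1 else 0 := fun w => by
    rw [sum_boole, Nat.cast_id, filter_mem_eq_inter, inter_comm]
  simp_rw [hcard, sum_sum_neighborFinset, smul_eq_mul, mul_boole, sum_ite_mem, univ_inter]

-- With all degrees 6 or 7 we have `d ^ 2 = 13 d - 42`, and the hypothesis gives
-- `∑_{u ∼ v} deg u ≥ 3 deg v + 21` (for `deg v = 7` because all degrees are at least 6).
theorem forty_five_le_card_edgeFinset (hV : Fintype.card V = 14)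
    (hdeg : ∀ v, 6 ≤ G.degree v ∧ G.degree v ≤ 7)
    (hsum : ∀ v, 3 * (Fintype.card V - 1) ≤ ∑ u ∈ G.neighborFinset v, G.degree u) :
    45 ≤ #G.edgeFinset := by
  have hlow : ∀ v ∈ univ, 3 * G.degree v + 21 ≤ ∑ u ∈ G.neighborFinset v, G.degree u := by
    intro v _
    obtain ⟨h6, h7⟩ := hdeg v
    have h := card_nsmul_le_sum _ _ _ fun u (_ : u ∈ G.neighborFinset v) => (hdeg u).1
    rw [card_neighborFinset_eq_degree, smul_eq_mul] at h
    have := hsum v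
    omega
  have hsq : ∀ u ∈ univ, G.degree u • G.degree u + 42 = 13 * G.degree u := by
    intro u _
    obtain ⟨h6, h7⟩ := hdeg u
    interval_cases G.degree u <;> rfl
  have h1 := sum_le_sum hlow
  have h2 := sum_congr rfl hsq
  rw [sum_sum_neighborFinset] at h1
  simp only [sum_add_distrib, ← mul_sum, sum_const, card_univ, hV, sum_degrees_eq_twice_card_edges,
    smul_eq_mul] at h1 h2
  omega

end Counting

theorem connected_induce_insert_of_forall_adj [DecidableEq V] {v : V} {T : Finset V}
    (hT : ∀ u ∈ T, G.Adj v u) : (G.induce (↑(insert v T) : Set V)).Connected := by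
  rw [connected_iff_exists_forall_reachable]
  refine ⟨⟨v, mem_insert_self v T⟩, ?_⟩
  rintro ⟨u, hu⟩
  rcases mem_insert.1 hu with rfl | hu
  · rfl
  · exact Adj.reachable (hT u hu)

theorem compliant_compl_iff : Compliant Gᶜ k ↔ Compliant G k := by
  rw [Compliant, Compliant, compl_compl, or_comm]

theorem exists_compl_adj_of_not_compliant [DecidableEq V] (hG : ¬Compliant G k) {v : V}
    {T : Finset V} (hT : ∀ u ∈ T, G.Adj v u) (hk : #T < k) :
    ∃ x, Gᶜ.Adj v x ∧ ∀ u ∈ T, Gᶜ.Adj u x := by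
  have hS : ¬∀ x ∉ insert v T, ∃ u ∈ insert v T, G.Adj u x := fun hdom =>
    hG (Or.inl ⟨insert v T, (card_insert_le v T).trans hk, insert_nonempty v T,
      connected_induce_insert_of_forall_adj hT, hdom⟩)
  push Not at hS
  obtain ⟨x, hx, hnadj⟩ := hS
  have hcompl : ∀ u ∈ insert v T, Gᶜ.Adj u x := fun u hu =>
    (compl_adj G u x).2 ⟨ne_of_mem_of_not_mem hu hx, hnadj u hu⟩
  exact ⟨x, hcompl v (mem_insert_self v T), fun u hu => hcompl u (mem_insert_of_mem hu)⟩

theorem exists_adj_of_not_compliant [DecidableEq V] (hG : ¬Compliant G k) {v : V}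
    {T : Finset V} (hT : ∀ u ∈ T, Gᶜ.Adj v u) (hk : #T < k) :
    ∃ x, G.Adj v x ∧ ∀ u ∈ T, G.Adj u x := by
  simpa only [compl_compl] using
    exists_compl_adj_of_not_compliant (compliant_compl_iff.not.2 hG) hT hk

variable [Fintype V] [DecidableEq V] [DecidableRel G.Adj]

theorem le_card_inter_neighborFinset_of_compl_adj (hG : ¬Compliant G k) (hk : 3 ≤ k)
    {v w : V} (hvw : Gᶜ.Adj v w) : k ≤ #(G.neighborFinset v ∩ G.neighborFinset w) := by
  by_contra! hlt
  obtain ⟨m, hvm, hm⟩ := exists_compl_adj_of_not_compliant hG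
    (fun u hu => (G.mem_neighborFinset v u).1 (mem_inter.1 hu).1) hlt
  obtain ⟨u, hvu, hu⟩ := exists_adj_of_not_compliant hG (T := {w, m})
    (by simpa only [forall_mem_insert, mem_singleton, forall_eq] using ⟨hvw, hvm⟩)
    (card_le_two.trans_lt hk)
  have huT : u ∈ G.neighborFinset v ∩ G.neighborFinset w :=
    mem_inter.2 ⟨(G.mem_neighborFinset v u).2 hvu, (G.mem_neighborFinset w u).2 (hu w (by simp))⟩
  exact ((compl_adj G u m).1 (hm u huT)).2 (hu m (by simp)).symm

theorem le_card_inter_neighborFinset_add_one_of_adj (hG : ¬Compliant G k) (hk : 3 ≤ k)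
    {v w : V} (hvw : G.Adj v w) : k ≤ #(G.neighborFinset v ∩ G.neighborFinset w) + 1 := by
  by_contra! hlt
  obtain ⟨r, hvr, hr⟩ := exists_compl_adj_of_not_compliant hG (v := v)
    (T := insert w (G.neighborFinset v ∩ G.neighborFinset w))
    (by simpa [forall_mem_insert] using ⟨hvw, fun u hvu _ => hvu⟩)
    ((card_insert_le _ _).trans_lt hlt)
  obtain ⟨u, hru, hu⟩ := exists_adj_of_not_compliant hG (T := {v, w})
    (by simpa only [forall_mem_insert, mem_singleton, forall_eq] using
      ⟨hvr.symm, (hr w (mem_insert_self _ _)).symm⟩)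
    (card_le_two.trans_lt hk)
  have huW : u ∈ G.neighborFinset v ∩ G.neighborFinset w := by
    simp [hu v (by simp), hu w (by simp)]
  exact ((compl_adj G u r).1 (hr u (mem_insert_of_mem huW))).2 hru.symm

theorem mul_card_sub_one_le_sum_degree_of_not_compliant (hG : ¬Compliant G k) (hk : 3 ≤ k)
    (v : V) :
    k * (Fintype.card V - 1) ≤ ∑ u ∈ G.neighborFinset v, G.degree u := by
  have hcodeg : ∀ w ∈ univ.erase v,
      k ≤ #(G.neighborFinset v ∩ G.neighborFinset w) + if G.Adj v w then 1 else 0 := by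
    intro w hw
    split_ifs with hvw
    · exact le_card_inter_neighborFinset_add_one_of_adj hG hk hvw
    · exact (le_card_inter_neighborFinset_of_compl_adj hG hk
        ((compl_adj G v w).2 ⟨(ne_of_mem_erase hw).symm, hvw⟩)).trans le_self_add
  have hdeg : ∑ w ∈ univ.erase v, (if G.Adj v w then 1 else 0) = G.degree v := by
    rw [sum_erase (f := fun w => if G.Adj v w then 1 else 0) _ (if_neg G.irrefl), sum_boole,
      Nat.cast_id, ← card_neighborFinset_eq_degree, neighborFinset_eq_filter]
  have hsum := card_nsmul_le_sum _ _ _ hcodeg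
  rw [sum_add_distrib, hdeg, card_erase_of_mem (mem_univ v), card_univ, smul_eq_mul,
    mul_comm] at hsum
  rw [← sum_card_inter_neighborFinset, ← add_sum_erase _ _ (mem_univ v), inter_self,
    card_neighborFinset_eq_degree]
  omega

-- Every pair of neighbours of `v` is missed by some non-neighbour, and each non-neighbour misses
-- at most `d - 3` of the `d` neighbours; so `d.choose 2 ≤ (|V| - 1 - d) * (d - 3).choose 2`.
theorem six_le_degree_of_not_compliant (hG : ¬Compliant G 3) (hV : Fintype.card V ≤ 15)
    (v : V) : 6 ≤ G.degree v := by
  by_contra! hd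
  set N := G.neighborFinset v
  set M := Gᶜ.neighborFinset v
  have hcodeg : ∀ m ∈ M, 3 ≤ #(N ∩ G.neighborFinset m) := fun m hm =>
    le_card_inter_neighborFinset_of_compl_adj hG le_rfl ((Gᶜ.mem_neighborFinset v m).1 hm)
  obtain ⟨m₀, hm₀⟩ : M.Nonempty := by
    obtain ⟨m, hvm, -⟩ := exists_compl_adj_of_not_compliant hG (T := ∅) (by simp) (by simp)
    exact ⟨m, (Gᶜ.mem_neighborFinset v m).2 hvm⟩
  have h3 : 3 ≤ #N := (hcodeg m₀ hm₀).trans (card_le_card inter_subset_left)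
  have hpairs :
      N.powersetCard 2 ⊆ M.biUnion fun m => (N \ G.neighborFinset m).powersetCard 2 := by
    intro p hp
    obtain ⟨hpN, hp2⟩ := mem_powersetCard.1 hp
    obtain ⟨m, hvm, hpm⟩ := exists_compl_adj_of_not_compliant hG
      (fun u hu => (G.mem_neighborFinset v u).1 (hpN hu)) (by omega)
    refine mem_biUnion.2 ⟨m, (Gᶜ.mem_neighborFinset v m).2 hvm, mem_powersetCard.2 ⟨?_, hp2⟩⟩
    exact fun u hu => mem_sdiff.2 ⟨hpN hu, fun h =>
      ((compl_adj G u m).1 (hpm u hu)).2 ((G.mem_neighborFinset m u).1 h).symm⟩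
  have hmiss : ∀ m ∈ M, #((N \ G.neighborFinset m).powersetCard 2) ≤ (#N - 3).choose 2 := by
    intro m hm
    rw [card_powersetCard]
    refine Nat.choose_le_choose 2 ?_
    have := card_sdiff_add_card_inter N (G.neighborFinset m)
    have := hcodeg m hm
    omega
  have hM : #M = Fintype.card V - 1 - #N := by
    simp only [M, N, card_neighborFinset_eq_degree, degree_compl]
  have key := (card_le_card hpairs).trans (card_biUnion_le.trans (sum_le_card_nsmul _ _ _ hmiss))
  rw [card_powersetCard, smul_eq_mul, hM] at key
  have hN : #N < 6 := by rwa [card_neighborFinset_eq_degree]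
  interval_cases #N <;> simp [Nat.choose] at key; omega

end SimpleGraph

theorem stmt9 {V : Type*} [Fintype V] [DecidableEq V] (G : SimpleGraph V)
    [DecidableRel G.Adj] (hV : Fintype.card V = 14)
    (hE : G.edgeFinset.card = 42 ∨ G.edgeFinset.card = 43 ∨ G.edgeFinset.card = 44) :
    Compliant G 3 := by
  by_contra hG
  have hdeg : ∀ v, 6 ≤ G.degree v ∧ G.degree v ≤ 7 := fun v => by
    have hGc := six_le_degree_of_not_compliant (compliant_compl_iff.not.2 hG) (by omega) v
    rw [degree_compl, hV] at hGc
    exact ⟨six_le_degree_of_not_compliant hG (by omega) v, by omega⟩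
  have hsum := mul_card_sub_one_le_sum_degree_of_not_compliant hG le_rfl
  have := forty_five_le_card_edgeFinset hV hdeg hsum
  omega
end

section
/- Let G be a finite simple graph on exactly 15 vertices and let u be a vertex of G with degree 6. If G is 3-non-compliant, then the sum of the degrees (in G) of the neighbors of u is at least 42, i.e. ∑_{v ∈ N_G(u)} deg_G(v) ≥ 42. -/
/-!
A non-compliant graph has no connected dominating set of size at most three in `G` or in `Gᶜ`.
Applied to stars, this says: for every path `b - a - c` of `G` some vertex misses `a`, `b`, `c`,
and for every such path of `Gᶜ` some vertex is adjacent to all three. With `N = N(u)` and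
`M` the 8 vertices outside `N ∪ {u}`, these two facts give every vertex of `N` at least two
neighbours in `N` and every vertex of `M` at least three. Counting the edges leaving `N` from
the other side, `∑_{v ∈ N} deg v = ∑_y |N(y) ∩ N| ≥ 6 + 6·2 + 8·3 = 42`.
-/

open Finset

namespace SimpleGraph

variable {V : Type*} {G : SimpleGraph V}

lemma induce_triple_connected_of_adj_of_adj [DecidableEq V] {a b c : V}
    (hab : G.Adj a b) (hac : G.Adj a c) :
    (G.induce (↑({a, b, c} : Finset V) : Set V)).Connected := by
  have hunion : (↑({a, b, c} : Finset V) : Set V) = {a, b} ∪ {a, c} := by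
    ext
    simp only [coe_insert, coe_singleton, Set.mem_insert_iff, Set.mem_singleton_iff,
      Set.mem_union]
    tauto
  rw [hunion]
  exact induce_union_connected (induce_pair_connected_of_adj hab).preconnected
    (induce_pair_connected_of_adj hac).preconnected ⟨a, by simp⟩

lemma exists_not_adj_of_not_connDomSet [DecidableEq V] {a b c : V}
    (h : ¬ ConnDomSet G {a, b, c}) (hab : G.Adj a b) (hac : G.Adj a c) :
    ∃ t ∉ ({a, b, c} : Finset V), ¬ G.Adj a t ∧ ¬ G.Adj b t ∧ ¬ G.Adj c t := by
  simp only [ConnDomSet, not_and, not_forall, not_exists] at h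
  obtain ⟨t, ht, hdom⟩ := h ⟨a, by simp⟩ (induce_triple_connected_of_adj_of_adj hab hac)
  exact ⟨t, ht, hdom a (by simp), hdom b (by simp), hdom c (by simp)⟩

lemma exists_common_adj_of_not_connDomSet_compl [DecidableEq V] {a b c : V}
    (h : ¬ ConnDomSet Gᶜ {a, b, c}) (hab : Gᶜ.Adj a b) (hac : Gᶜ.Adj a c) :
    ∃ t, G.Adj a t ∧ G.Adj b t ∧ G.Adj c t := by
  obtain ⟨t, ht, hat, hbt, hct⟩ := exists_not_adj_of_not_connDomSet h hab hac
  simp only [mem_insert, mem_singleton, not_or] at ht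
  simp only [compl_adj, not_and, not_not] at hat hbt hct
  exact ⟨t, hat (Ne.symm ht.1), hbt (Ne.symm ht.2.1), hct (Ne.symm ht.2.2)⟩

lemma sum_degree_eq_sum_card_filter_adj [Fintype V] [DecidableRel G.Adj] (s : Finset V) :
    ∑ x ∈ s, G.degree x = ∑ y, #{x ∈ s | G.Adj x y} := by
  simp_rw [← card_neighborFinset_eq_degree, neighborFinset_eq_filter]
  exact sum_card_bipartiteAbove_eq_sum_card_bipartiteBelow G.Adj

section NotCompliant

variable [DecidableEq V] {u : V}

lemma exists_not_adj_of_not_compliant (hG : ¬ Compliant G 3) {x y : V} (hx : G.Adj u x)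
    (hy : G.Adj u y) :
    ∃ w, w ≠ u ∧ ¬ G.Adj u w ∧ ¬ G.Adj x w ∧ ¬ G.Adj y w := by
  have h : ¬ ConnDomSet G {u, x, y} := fun h => hG (.inl ⟨_, card_le_three, h⟩)
  obtain ⟨w, hw, huw, hxw, hyw⟩ := exists_not_adj_of_not_connDomSet h hx hy
  exact ⟨w, fun hwu => hw (by simp [hwu]), huw, hxw, hyw⟩

lemma exists_common_adj_of_not_compliant (hG : ¬ Compliant G 3) {a b c : V} (hab : Gᶜ.Adj a b)
    (hac : Gᶜ.Adj a c) :
    ∃ t, G.Adj a t ∧ G.Adj b t ∧ G.Adj c t :=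
  exists_common_adj_of_not_connDomSet_compl (fun h => hG (.inr ⟨_, card_le_three, h⟩)) hab hac

variable [Fintype V] [DecidableRel G.Adj]

lemma one_lt_card_filter_adj_of_not_compliant (hG : ¬ Compliant G 3) {x : V} (hx : G.Adj u x) :
    1 < #{t ∈ G.neighborFinset u | G.Adj t x} := by
  -- `t` is a common neighbour of `u`, `x` and a vertex `w ∉ N(u) ∪ {u}` missing `x` and `z`.
  have avoid : ∀ z, G.Adj u z → ∃ t, G.Adj u t ∧ G.Adj t x ∧ t ≠ z := by
    intro z hz
    obtain ⟨w, hwu, huw, hxw, hzw⟩ := exists_not_adj_of_not_compliant hG hx hz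
    have hwx : w ≠ x := by rintro rfl; exact huw hx
    obtain ⟨t, hwt, hut, hxt⟩ := exists_common_adj_of_not_compliant hG
      ((compl_adj _ _ _).mpr ⟨hwu, fun h => huw h.symm⟩)
      ((compl_adj _ _ _).mpr ⟨hwx, fun h => hxw h.symm⟩)
    exact ⟨t, hut, hxt.symm, by rintro rfl; exact hzw hwt.symm⟩
  obtain ⟨z, huz, hzx, -⟩ := avoid x hx
  obtain ⟨t, hut, htx, htz⟩ := avoid z huz
  exact one_lt_card_iff.mpr ⟨t, z, by simp [hut, htx], by simp [huz, hzx], htz⟩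

lemma two_lt_card_filter_adj_of_not_compliant (hG : ¬ Compliant G 3) {w : V} (hwu : w ≠ u)
    (huw : ¬ G.Adj u w) :
    2 < #{t ∈ G.neighborFinset u | G.Adj t w} := by
  have huw' : Gᶜ.Adj u w := (compl_adj _ _ _).mpr ⟨hwu.symm, huw⟩
  -- `t` is a common neighbour of `u`, `w` and a vertex `w' ∉ N(u) ∪ {u}` missing `x` and `y`.
  have avoid : ∀ x y, G.Adj u x → G.Adj u y →
      ∃ t, G.Adj u t ∧ G.Adj t w ∧ t ≠ x ∧ t ≠ y := by
    intro x y hx hy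
    obtain ⟨w', hw'u, huw₂, hxw', hyw'⟩ := exists_not_adj_of_not_compliant hG hx hy
    obtain ⟨t, hut, hwt, hw't⟩ :=
      exists_common_adj_of_not_compliant hG huw' ((compl_adj _ _ _).mpr ⟨hw'u.symm, huw₂⟩)
    exact ⟨t, hut, hwt.symm, by rintro rfl; exact hxw' hw't.symm,
      by rintro rfl; exact hyw' hw't.symm⟩
  obtain ⟨t₁, hut₁, hwt₁, -⟩ := exists_common_adj_of_not_compliant hG huw' huw'
  obtain ⟨t₂, hut₂, ht₂w, ht₂₁, -⟩ := avoid t₁ t₁ hut₁ hut₁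
  obtain ⟨t₃, hut₃, ht₃w, ht₃₁, ht₃₂⟩ := avoid t₁ t₂ hut₁ hut₂
  exact two_lt_card_iff.mpr ⟨t₁, t₂, t₃, by simp [hut₁, hwt₁.symm], by simp [hut₂, ht₂w],
    by simp [hut₃, ht₃w], ht₂₁.symm, ht₃₁.symm, ht₃₂.symm⟩

end NotCompliant

end SimpleGraph

open SimpleGraph in
theorem stmt12 {V : Type*} [Fintype V] [DecidableEq V] (G : SimpleGraph V)
    [DecidableRel G.Adj] (hV : Fintype.card V = 15) (u : V)
    (hdeg : G.degree u = 6) (hG : ¬ Compliant G 3) :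
    42 ≤ ∑ v ∈ G.neighborFinset u, G.degree v := by
  set N := G.neighborFinset u
  set f : V → ℕ := fun y => #{x ∈ N | G.Adj x y}
  have huN : u ∉ N := G.notMem_neighborFinset_self u
  have hu : f u = 6 := by
    rw [← hdeg, ← card_neighborFinset_eq_degree]
    exact congrArg card (filter_true_of_mem fun x hx => ((mem_neighborFinset _ _ _).mp hx).symm)
  have hN : #N • 2 ≤ ∑ y ∈ N, f y := card_nsmul_le_sum _ _ _ fun x hx =>
    one_lt_card_filter_adj_of_not_compliant hG ((mem_neighborFinset _ _ _).mp hx)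
  have hM : #(insert u N)ᶜ • 3 ≤ ∑ y ∈ (insert u N)ᶜ, f y :=
    card_nsmul_le_sum _ _ _ fun w hw => by
      simp only [mem_compl, mem_insert, not_or, N, mem_neighborFinset] at hw
      exact two_lt_card_filter_adj_of_not_compliant hG hw.1 hw.2
  rw [card_neighborFinset_eq_degree, hdeg] at hN
  rw [card_compl, card_insert_of_notMem huN, card_neighborFinset_eq_degree, hdeg, hV] at hM
  calc 42 = f u + 6 • 2 + (15 - (6 + 1)) • 3 := by rw [hu]; rfl
    _ ≤ f u + ∑ y ∈ N, f y + ∑ y ∈ (insert u N)ᶜ, f y := by gcongr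
    _ = ∑ y, f y := by rw [← sum_insert huN, sum_add_sum_compl]
    _ = ∑ v ∈ N, G.degree v := (sum_degree_eq_sum_card_filter_adj N).symm
end

section
/- Let G be a finite simple graph on exactly 15 vertices whose number of edges is 49, 50, 51, or 52. Then there exists H equal to G or to the complement of G, and a vertex v of H, such that the sum of the degrees (in H) of the neighbors of v is at most 45, i.e. ∑_{u ∈ N_H(v)} deg_H(u) ≤ 45. -/
/-!
Suppose every neighbourhood degree sum of `G` and of `Gᶜ` exceeds `45`. Since all degrees are at
most `14`, a vertex of degree `d` has neighbourhood degree sum at most `14 d`; applied to `G` and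
`Gᶜ` this confines all degrees to `[4, 10]`, then (with the improved maximum) to `[5, 9]` and
finally to `[6, 8]`. A degree-6 vertex then needs at least four neighbours of degree 8, while the
condition in `Gᶜ` forces every degree-8 vertex to have few neighbours of degree 6. Double counting
the edges between degree-6 and degree-8 vertices contradicts `#{deg 8} - #{deg 6} = 2e - 105`
for `49 ≤ e ≤ 52`.
-/

open Finset

namespace SimpleGraph

variable {V : Type*} [Fintype V]

def neighborDegreeSum (G : SimpleGraph V) [DecidableRel G.Adj] (v : V) : ℕ :=
  ∑ u ∈ G.neighborFinset v, G.degree u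

variable {G : SimpleGraph V} [DecidableRel G.Adj]

theorem neighborDegreeSum_le_degree_mul {M : ℕ} (hM : ∀ u, G.degree u ≤ M) (v : V) :
    G.neighborDegreeSum v ≤ G.degree v * M := by
  calc G.neighborDegreeSum v ≤ ∑ _u ∈ G.neighborFinset v, M := sum_le_sum fun u _ => hM u
    _ = G.degree v * M := by rw [sum_const, smul_eq_mul, card_neighborFinset_eq_degree]

theorem neighborDegreeSum_add_mul_card_filter_le {a b : ℕ} (hb : ∀ u, G.degree u ≤ b)
    (p : V → Prop) [DecidablePred p] (hp : ∀ u, p u → G.degree u ≤ a) (v : V) :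
    G.neighborDegreeSum v + (b - a) * #{u ∈ G.neighborFinset v | p u} ≤ b * G.degree v := by
  calc G.neighborDegreeSum v + (b - a) * #{u ∈ G.neighborFinset v | p u}
      = ∑ u ∈ G.neighborFinset v, (G.degree u + if p u then b - a else 0) := by
        rw [sum_add_distrib, sum_ite, sum_const_zero, add_zero, sum_const, smul_eq_mul,
          mul_comm, neighborDegreeSum]
    _ ≤ ∑ _u ∈ G.neighborFinset v, b := by
        refine sum_le_sum fun u _ => ?_
        split_ifs with hpu
        · have := hp u hpu; have := hb u; omega
        · simpa using hb u
    _ = b * G.degree v := by rw [sum_const, smul_eq_mul, card_neighborFinset_eq_degree, mul_comm]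

theorem sum_card_filter_neighborFinset_comm (p q : V → Prop) [DecidablePred p]
    [DecidablePred q] :
    ∑ v with p v, #{u ∈ G.neighborFinset v | q u} =
      ∑ w with q w, #{u ∈ G.neighborFinset w | p u} := by
  convert sum_card_bipartiteAbove_eq_sum_card_bipartiteBelow G.Adj
    (s := univ.filter p) (t := univ.filter q) using 3 with v _ w _
  · ext u; simp [and_comm]
  · ext u; simp [adj_comm, and_comm]

variable [DecidableEq V]

/-- Splitting `V` into `v`, its neighbours and its non-neighbours; on a non-neighbour `u` the
degrees in `G` and `Gᶜ` add up to `|V| - 1`. -/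
theorem sum_degree_add_neighborDegreeSum_compl (v : V) :
    ∑ u, G.degree u + Gᶜ.neighborDegreeSum v =
      G.degree v + G.neighborDegreeSum v + (Fintype.card V - 1) * Gᶜ.degree v := by
  have hsplit : ∑ u, G.degree u =
      G.degree v + G.neighborDegreeSum v + ∑ u ∈ Gᶜ.neighborFinset v, G.degree u := by
    have hv : v ∈ (G.neighborFinset v)ᶜ := by simp
    rw [neighborFinset_compl, sdiff_singleton_eq_erase, ← sum_add_sum_compl (G.neighborFinset v),
      ← add_sum_erase _ _ hv, neighborDegreeSum]
    ring
  have hcompl : ∑ u ∈ Gᶜ.neighborFinset v, G.degree u + Gᶜ.neighborDegreeSum v =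
      (Fintype.card V - 1) * Gᶜ.degree v := by
    rw [neighborDegreeSum, ← sum_add_distrib]
    calc ∑ u ∈ Gᶜ.neighborFinset v, (G.degree u + Gᶜ.degree u)
        = ∑ _u ∈ Gᶜ.neighborFinset v, (Fintype.card V - 1) := by
          refine sum_congr rfl fun u _ => ?_
          have := G.degree_lt_card_verts u
          rw [degree_compl]
          omega
      _ = _ := by rw [sum_const, smul_eq_mul, card_neighborFinset_eq_degree, mul_comm]
  omega

end SimpleGraph

open SimpleGraph

section FifteenVertices

variable {V : Type*} [Fintype V] {G : SimpleGraph V} [DecidableRel G.Adj]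

theorem two_mul_card_edgeFinset_add_card_degree_six (hV : Fintype.card V = 15)
    (hdeg : ∀ v, 6 ≤ G.degree v ∧ G.degree v ≤ 8) :
    2 * #G.edgeFinset + #{v | G.degree v = 6} = 105 + #{v | G.degree v = 8} := by
  have hpoint : ∀ v, G.degree v + (if G.degree v = 6 then 1 else 0) =
      7 + (if G.degree v = 8 then 1 else 0) := fun v => by
    have := hdeg v; split_ifs <;> omega
  have hsum := sum_congr rfl fun v (_ : v ∈ univ) => hpoint v
  rwa [sum_add_distrib, sum_add_distrib, sum_boole, sum_boole, sum_const, card_univ, hV,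
    sum_degrees_eq_twice_card_edges, smul_eq_mul, Nat.cast_id, Nat.cast_id] at hsum

variable [DecidableEq V]

theorem degree_compl_eq_fourteen_sub (hV : Fintype.card V = 15) (v : V) :
    Gᶜ.degree v = 14 - G.degree v := by
  rw [degree_compl, hV]

theorem six_le_degree_and_degree_le_eight (hV : Fintype.card V = 15)
    (hG : ∀ v, 45 < G.neighborDegreeSum v) (hGc : ∀ v, 45 < Gᶜ.neighborDegreeSum v) (v : V) :
    6 ≤ G.degree v ∧ G.degree v ≤ 8 := by
  have hc := degree_compl_eq_fourteen_sub (G := G) hV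
  have step : ∀ M, (∀ u, G.degree u ≤ M ∧ Gᶜ.degree u ≤ M) →
      ∀ u, 45 < G.degree u * M ∧ 45 < Gᶜ.degree u * M := fun M hM u =>
    ⟨(hG u).trans_le (neighborDegreeSum_le_degree_mul (fun w => (hM w).1) u),
      (hGc u).trans_le (neighborDegreeSum_le_degree_mul (fun w => (hM w).2) u)⟩
  have h14 := step 14 fun u => by
    have := G.degree_lt_card_verts u; have := hc u; omega
  have h10 := step 10 fun u => by have := h14 u; have := hc u; omega
  have h9 := step 9 fun u => by have := h10 u; have := hc u; omega
  have := h9 v; have := hc v; omega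

theorem four_le_card_degree_eight_neighbors (hV : Fintype.card V = 15)
    (hG : ∀ v, 45 < G.neighborDegreeSum v) (hGc : ∀ v, 45 < Gᶜ.neighborDegreeSum v) {v : V}
    (hv : G.degree v = 6) : 4 ≤ #{u ∈ G.neighborFinset v | G.degree u = 8} := by
  have hdeg := six_le_degree_and_degree_le_eight hV hG hGc
  have hle := neighborDegreeSum_add_mul_card_filter_le (a := 7) (fun u => (hdeg u).2)
    (fun u => ¬G.degree u = 8) (fun u hu => by have := hdeg u; omega) v
  have hcard := card_filter_add_card_filter_not (s := G.neighborFinset v)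
    (fun u => G.degree u = 8)
  rw [card_neighborFinset_eq_degree] at hcard
  have := hG v
  omega

/-- By `sum_degree_add_neighborDegreeSum_compl`, the condition at `w` in `Gᶜ` forces
`G.neighborDegreeSum w ≥ 2 * #G.edgeFinset - 46`. -/
theorem two_mul_card_degree_six_neighbors_add_le (hV : Fintype.card V = 15)
    (hG : ∀ v, 45 < G.neighborDegreeSum v) (hGc : ∀ v, 45 < Gᶜ.neighborDegreeSum v) {w : V}
    (hw : G.degree w = 8) :
    2 * #{u ∈ G.neighborFinset w | G.degree u = 6} + 2 * #G.edgeFinset ≤ 110 := by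
  have hdeg := six_le_degree_and_degree_le_eight hV hG hGc
  have hle := neighborDegreeSum_add_mul_card_filter_le (a := 6) (fun u => (hdeg u).2)
    (fun u => G.degree u = 6) (fun u hu => hu.le) w
  have hsplit := G.sum_degree_add_neighborDegreeSum_compl w
  rw [sum_degrees_eq_twice_card_edges, hV, degree_compl_eq_fourteen_sub hV, hw] at hsplit
  have := hGc w
  omega

end FifteenVertices

theorem stmt15 {V : Type*} [Fintype V] [DecidableEq V] (G : SimpleGraph V)
    [DecidableRel G.Adj] (hV : Fintype.card V = 15)
    (hE : G.edgeFinset.card = 49 ∨ G.edgeFinset.card = 50 ∨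
      G.edgeFinset.card = 51 ∨ G.edgeFinset.card = 52) :
    (∃ v : V, ∑ u ∈ G.neighborFinset v, G.degree u ≤ 45) ∨
    (∃ v : V, ∑ u ∈ Gᶜ.neighborFinset v, Gᶜ.degree u ≤ 45) := by
  by_contra! ⟨hG, hGc⟩
  have hcount := two_mul_card_edgeFinset_add_card_degree_six hV
    (six_le_degree_and_degree_le_eight hV hG hGc)
  have hlower : #{v | G.degree v = 6} * 4 ≤
      ∑ v with G.degree v = 6, #{u ∈ G.neighborFinset v | G.degree u = 8} :=
    card_nsmul_le_sum _ _ _ fun v hv =>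
      four_le_card_degree_eight_neighbors hV hG hGc (mem_filter.mp hv).2
  have hupper : ∑ w with G.degree w = 8,
      (2 * #{u ∈ G.neighborFinset w | G.degree u = 6} + 2 * #G.edgeFinset) ≤
        #{v | G.degree v = 8} * 110 :=
    sum_le_card_nsmul _ _ _ fun w hw =>
      two_mul_card_degree_six_neighbors_add_le hV hG hGc (mem_filter.mp hw).2
  rw [sum_add_distrib, ← mul_sum, sum_card_filter_neighborFinset_comm, sum_const,
    smul_eq_mul] at hupper
  have hcard_six_le : #{v | G.degree v = 6} ≤ 15 := hV ▸ card_filter_le _ _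
  rcases hE with h | h | h | h <;> rw [h] at hcount hupper <;> omega
end

section
/- Let n ≥ 15 and let G be a finite simple graph on n vertices. Then there exists H equal to G or to the complement of G together with a nonempty set S of vertices such that the subgraph of H induced by S is connected and at least n − ⌊(n+1)/4⌋ vertices outside S have a neighbor (in H) in S. (Equivalently, G or its complement has a minor with maximum degree at least n − ⌊(n+1)/4⌋, i.e. n − ⌊(n+1)/4⌋ ≤ f(n).) -/
open Finset

namespace SimpleGraph

variable {V : Type*}

theorem induce_singleton_finset_connected (H : SimpleGraph V) (v : V) :
    (H.induce (↑({v} : Finset V) : Set V)).Connected := by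
  rw [coe_singleton]
  exact @Connected.mk _ _ .of_subsingleton ⟨⟨v, rfl⟩⟩

theorem induce_insert_finset_connected [DecidableEq V] (H : SimpleGraph V) {S : Finset V}
    {d u : V} (hu : u ∈ S) (hdu : H.Adj d u) (hS : (H.induce (↑S : Set V)).Connected) :
    (H.induce (↑(insert d S) : Set V)).Connected := by
  rw [coe_insert, Set.insert_eq]
  exact connected_induce_union .of_subsingleton hS.preconnected rfl hu hdu

theorem induce_insert_finset_connected_of_forall_adj [DecidableEq V] (H : SimpleGraph V) {s : V}
    {T : Finset V} (h : ∀ t ∈ T, H.Adj s t) :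
    (H.induce (↑(insert s T) : Set V)).Connected := by
  induction T using Finset.induction_on with
  | empty => exact H.induce_singleton_finset_connected s
  | insert t T _ ih =>
    rw [Finset.insert_comm]
    exact H.induce_insert_finset_connected (mem_insert_self s T) (h t (mem_insert_self t T)).symm
      (ih fun t' ht' => h t' (mem_insert_of_mem ht'))

/-- Contracting `S` to a single vertex gives a minor of `H` with a vertex of degree at least
`k`. -/
def HasDegreeMinor (H : SimpleGraph V) (k : ℕ) : Prop :=
  ∃ S : Finset V, S.Nonempty ∧ (H.induce (↑S : Set V)).Connected ∧
    k ≤ {x : V | x ∉ S ∧ ∃ u ∈ S, H.Adj u x}.ncard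

section Domination

open scoped Classical

variable [Fintype V] (H : SimpleGraph V)

noncomputable def undominated (S : Finset V) : Finset V :=
  {x | x ∉ S ∧ ∀ u ∈ S, ¬ H.Adj u x}

noncomputable def dominated (S : Finset V) : Finset V :=
  {x | x ∉ S ∧ ∃ u ∈ S, H.Adj u x}

variable {H}

theorem mem_undominated {S : Finset V} {x : V} :
    x ∈ H.undominated S ↔ x ∉ S ∧ ∀ u ∈ S, ¬ H.Adj u x := by
  simp [undominated]

theorem mem_dominated {S : Finset V} {x : V} :
    x ∈ H.dominated S ↔ x ∉ S ∧ ∃ u ∈ S, H.Adj u x := by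
  simp [dominated]

variable (H)

theorem coe_dominated (S : Finset V) :
    (↑(H.dominated S) : Set V) = {x | x ∉ S ∧ ∃ u ∈ S, H.Adj u x} := by
  ext x
  simp [mem_dominated]

theorem card_add_card_undominated_add_card_dominated (S : Finset V) :
    #S + #(H.undominated S) + #(H.dominated S) = Fintype.card V := by
  have hdisj : Disjoint (H.undominated S) (H.dominated S) :=
    Finset.disjoint_left.mpr fun _ hU hD => by
      obtain ⟨-, u, hu, hux⟩ := mem_dominated.mp hD
      exact (mem_undominated.mp hU).2 u hu hux
  have hunion : H.undominated S ∪ H.dominated S = Sᶜ := by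
    ext x
    simp only [mem_union, mem_undominated, mem_dominated, mem_compl]
    by_cases hx : ∃ u ∈ S, H.Adj u x <;> grind
  rw [add_assoc, ← card_union_of_disjoint hdisj, hunion, card_add_card_compl]

theorem card_undominated_singleton_add_compl (v : V) :
    #(H.undominated {v}) + #(Hᶜ.undominated {v}) + 1 = Fintype.card V := by
  have : Hᶜ.undominated {v} = H.dominated {v} := by
    ext x
    simp only [mem_undominated, mem_dominated, mem_singleton, compl_adj]
    grind
  rw [this, ← H.card_add_card_undominated_add_card_dominated {v}, card_singleton]
  ring

theorem card_undominated_insert_add_le (S : Finset V) (d : V) :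
    #(H.undominated (insert d S)) + #{x ∈ H.undominated S | H.Adj d x}
      ≤ #(H.undominated S) := by
  have hsub : H.undominated (insert d S) ⊆
      H.undominated S \ {x ∈ H.undominated S | H.Adj d x} := by
    intro x hx
    simp only [mem_undominated, mem_insert, mem_sdiff, mem_filter] at hx ⊢
    grind
  have := card_le_card hsub
  rw [card_sdiff_of_subset (filter_subset _ _)] at this
  have := card_le_card (filter_subset (fun x => H.Adj d x) (H.undominated S))
  omega

theorem connDomSet_compl_insert {S T : Finset V} {s : V} (hs : s ∈ S)
    (hT : T ⊆ H.undominated S) (hTne : T.Nonempty)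
    (hD : ∀ d ∈ H.dominated S, ∃ w ∈ T, ¬ H.Adj d w) :
    ConnDomSet Hᶜ (insert s T) := by
  have hTU : ∀ w ∈ T, w ∉ S ∧ ∀ u ∈ S, ¬ H.Adj u w :=
    fun w hw => mem_undominated.mp (hT hw)
  refine ⟨insert_nonempty s T,
    Hᶜ.induce_insert_finset_connected_of_forall_adj fun w hw => ?_, fun x hx => ?_⟩
  · exact ⟨ne_of_mem_of_not_mem hs (hTU w hw).1, (hTU w hw).2 s hs⟩
  rw [mem_insert, not_or] at hx
  by_cases hxS : x ∈ S
  · obtain ⟨w, hw⟩ := hTne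
    exact ⟨w, mem_insert_of_mem hw, (ne_of_mem_of_not_mem hxS (hTU w hw).1).symm,
      fun h => (hTU w hw).2 x hxS h.symm⟩
  by_cases hxD : ∃ u ∈ S, H.Adj u x
  · obtain ⟨w, hwT, hxw⟩ := hD x (mem_dominated.mpr ⟨hxS, hxD⟩)
    obtain ⟨u, hu, hux⟩ := hxD
    refine ⟨w, mem_insert_of_mem hwT, ?_, fun h => hxw h.symm⟩
    rintro rfl
    exact (hTU w hwT).2 u hu hux
  · exact ⟨s, mem_insert_self s T, Ne.symm hx.1, fun h => hxD ⟨s, hs, h⟩⟩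

/-- Adding a dominated vertex with at least three undominated neighbours never increases
`3 * #S + #(H.undominated S)`; a largest set reached this way is stuck. -/
theorem exists_greedy_connected_set (v : V) :
    ∃ S : Finset V, v ∈ S ∧ (H.induce (↑S : Set V)).Connected ∧
      3 * #S + #(H.undominated S) ≤ #(H.undominated {v}) + 3 ∧
      ∀ d ∈ H.dominated S, #{x ∈ H.undominated S | H.Adj d x} ≤ 2 := by
  let F : Finset (Finset V) := {S | v ∈ S ∧ (H.induce (↑S : Set V)).Connected ∧
      3 * #S + #(H.undominated S) ≤ #(H.undominated {v}) + 3}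
  have hvF : {v} ∈ F := by simp [F, H.induce_singleton_finset_connected v, add_comm]
  obtain ⟨S, hSF, hmax⟩ := F.exists_max_image card ⟨{v}, hvF⟩
  obtain ⟨hvS, hconn, hbound⟩ : v ∈ S ∧ (H.induce (↑S : Set V)).Connected ∧
      3 * #S + #(H.undominated S) ≤ #(H.undominated {v}) + 3 := by simpa [F] using hSF
  refine ⟨S, hvS, hconn, hbound, fun d hd => ?_⟩
  by_contra! h3
  obtain ⟨hdS, u, hu, hud⟩ := mem_dominated.mp hd
  have hdF : insert d S ∈ F := by
    have := H.card_undominated_insert_add_le S d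
    simp only [F, mem_filter, mem_univ, true_and, card_insert_of_notMem hdS]
    exact ⟨mem_insert_of_mem hvS, H.induce_insert_finset_connected hu hud.symm hconn, by omega⟩
  have := hmax _ hdF
  rw [card_insert_of_notMem hdS] at this
  omega

theorem hasDegreeMinor_of_card_add_card_undominated_le {S : Finset V} (hS : S.Nonempty)
    (hconn : (H.induce (↑S : Set V)).Connected) {k : ℕ}
    (hk : #S + #(H.undominated S) ≤ k) : H.HasDegreeMinor (Fintype.card V - k) := by
  refine ⟨S, hS, hconn, ?_⟩
  rw [← coe_dominated, Set.ncard_coe_finset]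
  have := H.card_add_card_undominated_add_card_dominated S
  omega

variable {H} in
theorem _root_.ConnDomSet.hasDegreeMinor {S : Finset V} (h : ConnDomSet H S) {k : ℕ}
    (hk : #S ≤ k) : H.HasDegreeMinor (Fintype.card V - k) := by
  obtain ⟨hS, hconn, hdom⟩ := h
  have hU : H.undominated S = ∅ := eq_empty_of_forall_notMem fun x hx => by
    obtain ⟨hxS, hx⟩ := mem_undominated.mp hx
    obtain ⟨u, hu, hux⟩ := hdom x hxS
    exact hx u hu hux
  exact H.hasDegreeMinor_of_card_add_card_undominated_le hS hconn (by simpa [hU] using hk)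

theorem hasDegreeMinor_or_compl_hasDegreeMinor (v : V) (hn : 15 ≤ Fintype.card V)
    (hv : 2 * #(H.undominated {v}) + 1 ≤ Fintype.card V) :
    H.HasDegreeMinor (Fintype.card V - (Fintype.card V + 1) / 4) ∨
      Hᶜ.HasDegreeMinor (Fintype.card V - (Fintype.card V + 1) / 4) := by
  obtain ⟨S, hvS, hconn, hbound, hstuck⟩ := H.exists_greedy_connected_set v
  have hS : S.Nonempty := ⟨v, hvS⟩
  have compl_of_blocking : ∀ T ⊆ H.undominated S, T.Nonempty → #T ≤ 3 →
      (∀ d ∈ H.dominated S, ∃ w ∈ T, ¬ H.Adj d w) →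
      Hᶜ.HasDegreeMinor (Fintype.card V - (Fintype.card V + 1) / 4) :=
    fun T hT hTne hT3 hD => (H.connDomSet_compl_insert hvS hT hTne hD).hasDegreeMinor
      (by have := card_insert_le v T; omega)
  obtain hU | hU | hU : #(H.undominated S) ≤ 1 ∨ #(H.undominated S) = 2 ∨
      3 ≤ #(H.undominated S) := by omega
  -- `#S + #(H.undominated S) ≤ (#(H.undominated {v}) + 5) / 3 ≤ (n + 9) / 6 ≤ (n + 1) / 4`
  -- (with `n = Fintype.card V`) is where `15 ≤ n` is needed.
  · exact .inl (H.hasDegreeMinor_of_card_add_card_undominated_le hS hconn (by omega))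
  · by_cases hcover : ∃ d ∈ H.dominated S, ∀ x ∈ H.undominated S, H.Adj d x
    · obtain ⟨d, hd, hdU⟩ := hcover
      obtain ⟨hdS, u, hu, hud⟩ := mem_dominated.mp hd
      refine .inl (H.hasDegreeMinor_of_card_add_card_undominated_le ⟨d, mem_insert_self d S⟩
        (H.induce_insert_finset_connected hu hud.symm hconn) ?_)
      have := H.card_undominated_insert_add_le S d
      rw [filter_true_of_mem hdU] at this
      rw [card_insert_of_notMem hdS]
      omega
    · push Not at hcover
      exact .inr (compl_of_blocking _ Subset.rfl (card_pos.mp (by omega)) (by omega) hcover)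
  · obtain ⟨T, hTU, hT⟩ := exists_subset_card_eq hU
    refine .inr (compl_of_blocking T hTU (card_pos.mp (by omega)) hT.le fun d hd => ?_)
    by_contra! hTd
    have hTsub : T ⊆ {x ∈ H.undominated S | H.Adj d x} :=
      fun x hx => mem_filter.mpr ⟨hTU hx, hTd x hx⟩
    have := card_le_card hTsub
    have := hstuck d hd
    omega

end Domination

end SimpleGraph

theorem stmt18 (n : ℕ) (hn : 15 ≤ n) {V : Type*} [Fintype V]
    (G : SimpleGraph V) (hV : Fintype.card V = n) :
    ∃ H : SimpleGraph V, (H = G ∨ H = Gᶜ) ∧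
      ∃ S : Finset V, S.Nonempty ∧
        (H.induce (↑S : Set V)).Connected ∧
        n - (n + 1) / 4 ≤ {v : V | v ∉ S ∧ ∃ u ∈ S, H.Adj u v}.ncard := by
  subst hV
  obtain ⟨v⟩ : Nonempty V := Fintype.card_pos_iff.mp (by omega)
  suffices h : G.HasDegreeMinor (Fintype.card V - (Fintype.card V + 1) / 4) ∨
      Gᶜ.HasDegreeMinor (Fintype.card V - (Fintype.card V + 1) / 4) from
    h.elim (⟨G, .inl rfl, ·⟩) (⟨Gᶜ, .inr rfl, ·⟩)
  have hsplit := G.card_undominated_singleton_add_compl v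
  by_cases hG : 2 * #(G.undominated {v}) + 1 ≤ Fintype.card V
  · exact G.hasDegreeMinor_or_compl_hasDegreeMinor v hn hG
  · have := Gᶜ.hasDegreeMinor_or_compl_hasDegreeMinor v hn (by omega)
    rwa [compl_compl, or_comm] at this
end
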